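/- Let a, b, d, θ, TD, TR, D, τᵢ be real numbers with a ≥ 0, b ≥ 0, τᵢ > 0, 0 ≤ D ≤ TD and TD + D < TR. Then the existence-condition sets of the nine states I, ID, IS, IDS, AS, ASD, AP, APcAS, AScI are pairwise mutually exclusive: no two distinct condition sets among them can hold simultaneously. -/

import Mathlib

/-!
All nine conditions are linear in `a`, `d`, `θ` and the five quantities
`b·M⁺ ≤ b·M⁻ ≤ b·N⁺ ≤ b·R⁻ ≤ b·N⁻ ≤ b`. This chain holds because `b ≥ 0` and
`x ↦ exp (-x / τ)` is antitone with value `1` at `0`, while `0 ≤ D ≤ TD` and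
`TD + D < TR` order the exponents as
`2TR - D ≥ 2TR - TD - D ≥ TR - D ≥ TR - 2D ≥ TR - TD - D > 0`.
Given the chain, every pair of distinct conditions is refuted by linear arithmetic.
-/

/-- Existence conditions of the nine 2TR-periodic states of the biologically
relevant case `D ≤ TD`: `I, ID, IS, IDS, AS, ASD, AP, APcAS, AScI`
(indexed `0,…,8` in this order). -/
noncomputable def bioCond (a b d θ TD TR D τ : ℝ) : Fin 9 → Prop :=
  fun i =>
    let Nm : ℝ := Real.exp (-(TR - TD - D) / τ)
    let Np : ℝ := Real.exp (-(TR - D) / τ)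
    let Mm : ℝ := Real.exp (-(2 * TR - TD - D) / τ)
    let Mp : ℝ := Real.exp (-(2 * TR - D) / τ)
    let Rm : ℝ := Real.exp (-(TR - 2 * D) / τ)
    let P : ℝ := a - b + d
    match i with
    | ⟨0, _⟩ => d - b * Nm ≥ θ ∧ P ≥ θ                                   -- I
    | ⟨1, _⟩ => d - b * Nm < θ ∧ P ≥ θ                                   -- ID
    | ⟨2, _⟩ => d - b * Rm ≥ θ ∧ P < θ                                   -- IS
    | ⟨3, _⟩ => d - b * Rm < θ ∧ a - b * Rm + d ≥ θ ∧ P < θ              -- IDS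
    | ⟨4, _⟩ => a - b * Np + d < θ ∧ d - b * Mm ≥ θ                      -- AS
    | ⟨5, _⟩ => a - b * Np + d < θ ∧ d - b * Mm < θ ∧ a - b * Mm + d ≥ θ -- ASD
    | ⟨6, _⟩ => a - b * Mp + d < θ                                       -- AP
    | ⟨7, _⟩ => a - b * Mm + d < θ ∧ a - b * Mp + d ≥ θ                  -- APcAS
    | ⟨8, _⟩ => a - b * Rm + d < θ ∧ a - b * Np + d ≥ θ                  -- AScI

open Real

lemma exp_neg_div_le_exp_neg_div {τ x y : ℝ} (hτ : 0 < τ) (hxy : x ≤ y) :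
    exp (-y / τ) ≤ exp (-x / τ) :=
  exp_le_exp.mpr (div_le_div_of_nonneg_right (neg_le_neg hxy) hτ.le)

lemma exp_neg_div_le_one {τ x : ℝ} (hτ : 0 ≤ τ) (hx : 0 ≤ x) : exp (-x / τ) ≤ 1 :=
  exp_le_one_iff.mpr (div_nonpos_of_nonpos_of_nonneg (neg_nonpos.mpr hx) hτ)

lemma bio_decay_chain {b TD TR D τ : ℝ} (hb : 0 ≤ b) (hτ : 0 < τ)
    (hD0 : 0 ≤ D) (hDTD : D ≤ TD) (hTDTR : TD + D < TR) :
    b * exp (-(2 * TR - D) / τ) ≤ b * exp (-(2 * TR - TD - D) / τ) ∧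
    b * exp (-(2 * TR - TD - D) / τ) ≤ b * exp (-(TR - D) / τ) ∧
    b * exp (-(TR - D) / τ) ≤ b * exp (-(TR - 2 * D) / τ) ∧
    b * exp (-(TR - 2 * D) / τ) ≤ b * exp (-(TR - TD - D) / τ) ∧
    b * exp (-(TR - TD - D) / τ) ≤ b := by
  refine ⟨?_, ?_, ?_, ?_, mul_le_of_le_one_right hb (exp_neg_div_le_one hτ.le (by linarith))⟩ <;>
    exact mul_le_mul_of_nonneg_left (exp_neg_div_le_exp_neg_div hτ (by linarith)) hb

/-- In the biologically relevant case `D ≤ TD`, `TD + D < TR`, the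
existence-condition sets of the nine states `I, ID, IS, IDS, AS, ASD, AP,
APcAS, AScI` are pairwise mutually exclusive. -/
theorem bio_states_mutually_exclusive
    (a b d θ TD TR D τ : ℝ)
    (ha : 0 ≤ a) (hb : 0 ≤ b) (hτ : 0 < τ)
    (hD0 : 0 ≤ D) (hDTD : D ≤ TD) (hTDTR : TD + D < TR) :
    ∀ i j : Fin 9, i ≠ j →
      ¬(bioCond a b d θ TD TR D τ i ∧ bioCond a b d θ TD TR D τ j) := by
  obtain ⟨h₁, h₂, h₃, h₄, h₅⟩ := bio_decay_chain hb hτ hD0 hDTD hTDTR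
  intro i j hij ⟨hi, hj⟩
  fin_cases i <;> fin_cases j <;> simp only [bioCond] at hi hj <;>
    first
      | exact hij rfl
      | (casesm* _ ∧ _; linarith)
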